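/- arXiv:1711.02745 — 6 statements merged into one kernel-verified Lean document; each statement's English description precedes it below -/
import Mathlib

section
/- Let (Y(d,𝐝))_{d∈{0,1},𝐝∈{0,1}^n} be real-valued random variables and (D, 𝐃) a random element of {0,1} × {0,1}^n, with observed outcome Y = Y(D,𝐃). Assume (i) for all (d,𝐝), Y(d,𝐝) is independent of (D,𝐃); (ii) exchangeability: E[Y(d,𝐝)] = μ(d, Σ_j d_j) for some function μ. Let S = Σ_j D_j. Then for any (d,s) with P[D=d, S=s] > 0, E[Y | D=d, S=s] = μ(d,s). -/
/-!
Split the event `{D = d, S = s}` into the fibres `{(D, 𝐃) = (d, 𝐝)}` with `Σ 𝐝 = s`. On such a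
fibre the observed outcome is `Y(d, 𝐝)`, which is independent of `(D, 𝐃)`, so its integral over
the fibre is `E[Y(d, 𝐝)] P(fibre) = μ(d, s) P(fibre)`; summing over the fibres gives
`μ(d, s) P(D = d, S = s)`.
-/

open MeasureTheory ProbabilityTheory Finset
open scoped ProbabilityTheory

namespace ProbabilityTheory

variable {Ω β : Type*} {mΩ : MeasurableSpace Ω} {μ : Measure Ω} [MeasurableSpace β] {Z : Ω → β}

theorem IndepFun.setIntegral_preimage {X : Ω → ℝ} (hXZ : IndepFun X Z μ)
    (hX : AEStronglyMeasurable X μ) (hZ : Measurable Z) {B : Set β} (hB : MeasurableSet B) :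
    ∫ ω in Z ⁻¹' B, X ω ∂μ = (∫ ω, X ω ∂μ) * μ.real (Z ⁻¹' B) := by
  have hA : MeasurableSet (Z ⁻¹' B) := hZ hB
  have hindep : IndepFun X ((Z ⁻¹' B).indicator (1 : Ω → ℝ)) μ := by
    have hcomp : (Z ⁻¹' B).indicator (1 : Ω → ℝ) = B.indicator 1 ∘ Z :=
      funext fun _ ↦ Set.indicator_comp_right Z (g := 1)
    rw [hcomp]
    exact hXZ.comp measurable_id (measurable_one.indicator hB)
  calc ∫ ω in Z ⁻¹' B, X ω ∂μ
      = ∫ ω, X ω * (Z ⁻¹' B).indicator 1 ω ∂μ := by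
        rw [← integral_indicator hA]
        congr 1 with ω
        rw [← Set.indicator_mul_right]
        simp
    _ = (∫ ω, X ω ∂μ) * μ.real (Z ⁻¹' B) := by
        rw [hindep.integral_fun_mul_eq_mul_integral hX
          (aestronglyMeasurable_one.indicator hA), integral_indicator_one hA]

theorem setIntegral_preimage_finset_of_indepFun [MeasurableSingletonClass β] [IsFiniteMeasure μ]
    {X : β → Ω → ℝ} (hZ : Measurable Z) (B : Finset β)
    (hXZ : ∀ b ∈ B, IndepFun (X b) Z μ) (hX : ∀ b ∈ B, Integrable (X b) μ)
    {c : ℝ} (hc : ∀ b ∈ B, ∫ ω, X b ω ∂μ = c) :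
    ∫ ω in Z ⁻¹' B, X (Z ω) ω ∂μ = c * μ.real (Z ⁻¹' B) := by
  have hfiber : ∀ b ∈ B, MeasurableSet (Z ⁻¹' {b}) := fun b _ ↦ hZ (measurableSet_singleton b)
  have hdisj : Set.PairwiseDisjoint (B : Set β) (fun b ↦ Z ⁻¹' {b}) :=
    fun b _ b' _ hbb' ↦ (Set.disjoint_singleton.2 hbb').preimage Z
  have hon : ∀ b ∈ B, Set.EqOn (fun ω ↦ X (Z ω) ω) (X b) (Z ⁻¹' {b}) :=
    fun b _ ω (hω : Z ω = b) ↦ by simp only [hω]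
  rw [← Set.biUnion_preimage_singleton, set_biUnion_coe, measureReal_biUnion_finset hdisj hfiber,
    mul_sum,
    integral_biUnion_finset B hfiber hdisj fun b hb ↦
      ((hX b hb).integrableOn.congr_fun (hon b hb).symm (hfiber b hb))]
  refine sum_congr rfl fun b hb ↦ ?_
  rw [setIntegral_congr_fun (hfiber b hb) (hon b hb), ← hc b hb,
    (hXZ b hb).setIntegral_preimage (hX b hb).aestronglyMeasurable hZ (measurableSet_singleton b)]

end ProbabilityTheory

theorem stmt_1_general {Ω : Type*} [MeasureSpace Ω] [IsProbabilityMeasure (ℙ : Measure Ω)]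
    (n : ℕ) (Y : Bool → (Fin n → Bool) → Ω → ℝ)
    (D : Ω → Bool) (Dvec : Ω → Fin n → Bool)
    (hDmeas : Measurable D)
    (hDvecmeas : Measurable Dvec)
    (hint : ∀ d v, Integrable (Y d v))
    (hindep : ∀ d v, IndepFun (Y d v) (fun ω => (D ω, Dvec ω)) ℙ)
    (μf : Bool → ℕ → ℝ)
    (hexch : ∀ d v, (∫ ω, Y d v ω) =
      μf d ((Finset.univ.filter (fun j => v j = true)).card))
    (Yobs : Ω → ℝ) (hobs : ∀ ω, Yobs ω = Y (D ω) (Dvec ω) ω)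
    (d : Bool) (s : ℕ)
    (hpos : 0 < ℙ {ω | D ω = d ∧
      (Finset.univ.filter (fun j => Dvec ω j = true)).card = s}) :
    (∫ ω in {ω | D ω = d ∧
        (Finset.univ.filter (fun j => Dvec ω j = true)).card = s}, Yobs ω) /
      (ℙ {ω | D ω = d ∧
        (Finset.univ.filter (fun j => Dvec ω j = true)).card = s}).toReal
      = μf d s := by
  obtain rfl : Yobs = fun ω ↦ Y (D ω) (Dvec ω) ω := funext hobs
  let B : Finset (Bool × (Fin n → Bool)) := {p | p.1 = d ∧ #{j | p.2 j = true} = s}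
  have hE : {ω | D ω = d ∧ #{j | Dvec ω j = true} = s} = (fun ω ↦ (D ω, Dvec ω)) ⁻¹' B := by
    ext ω
    simp [B]
  have hμB : ∀ p ∈ B, ∫ ω, Y p.1 p.2 ω = μf d s := by
    intro p hp
    obtain ⟨rfl, rfl⟩ := (mem_filter.1 hp).2
    exact hexch p.1 p.2
  rw [hE] at hpos ⊢
  rw [← measureReal_def, setIntegral_preimage_finset_of_indepFun (hDmeas.prodMk hDvecmeas) B
    (X := fun p ↦ Y p.1 p.2) (fun p _ ↦ hindep p.1 p.2) (fun p _ ↦ hint p.1 p.2) hμB]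
  exact mul_div_cancel_right₀ _ (ENNReal.toReal_pos hpos.ne' (measure_ne_top _ _)).ne'

/-- Lemma 2 (Identification under exchangeability): under random assignment and
exchangeability, the conditional mean of the observed outcome given own treatment
`d` and number of treated neighbors `s` equals `μ d s`. -/
theorem stmt_1 {Ω : Type*} [MeasureSpace Ω] [IsProbabilityMeasure (ℙ : Measure Ω)]
    (n : ℕ) (Y : Bool → (Fin n → Bool) → Ω → ℝ)
    (D : Ω → Bool) (Dvec : Ω → Fin n → Bool)
    (hYmeas : ∀ d v, Measurable (Y d v)) (hDmeas : Measurable D)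
    (hDvecmeas : Measurable Dvec)
    (hint : ∀ d v, Integrable (Y d v))
    (hindep : ∀ d v, IndepFun (Y d v) (fun ω => (D ω, Dvec ω)) ℙ)
    (μf : Bool → ℕ → ℝ)
    (hexch : ∀ d v, (∫ ω, Y d v ω) =
      μf d ((Finset.univ.filter (fun j => v j = true)).card))
    (Yobs : Ω → ℝ) (hobs : ∀ ω, Yobs ω = Y (D ω) (Dvec ω) ω)
    (d : Bool) (s : ℕ)
    (hpos : 0 < ℙ {ω | D ω = d ∧
      (Finset.univ.filter (fun j => Dvec ω j = true)).card = s}) :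
    (∫ ω in {ω | D ω = d ∧
        (Finset.univ.filter (fun j => Dvec ω j = true)).card = s}, Yobs ω) /
      (ℙ {ω | D ω = d ∧
        (Finset.univ.filter (fun j => Dvec ω j = true)).card = s}).toReal
      = μf d s :=
  stmt_1_general n Y D Dvec hDmeas hDvecmeas hint hindep μf hexch Yobs hobs d s hpos
end

section
/- Let (Y(d,𝐝))_{d,𝐝} be integrable random variables independent of the random assignment (D,𝐃) ∈ {0,1}×{0,1}^n, with Y = Y(D,𝐃) and S = Σ_j D_j. Then for any (d,s) with P[D=d,S=s] > 0, E[Y | D=d, S=s] = Σ_{𝐝: Σ_j d_j = s} E[Y(d,𝐝)] · P[D=d | 𝐃=𝐝] P[𝐃=𝐝] / (P[D=d | S=s] P[S=s]). Moreover, if the coordinates D, D_1, …, D_n are i.i.d. Bernoulli(p) with p ∈ (0,1), this reduces to E[Y | D=d, S=s] = C(n,s)^{-1} Σ_{𝐝: Σ_j d_j = s} E[Y(d,𝐝)], where C(n,s) is the binomial coefficient. -/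
open MeasureTheory ProbabilityTheory Finset
open scoped ProbabilityTheory

/-! Partition the event `{D = d, S = s}` by the value `𝐝` of `𝐃`. On the cell `{D = d, 𝐃 = 𝐝}`
the observed outcome is `Y(d, 𝐝)`, which is independent of the assignment, so its integral there
is `E[Y(d, 𝐝)] · P[D = d, 𝐃 = 𝐝]`. Under i.i.d. Bernoulli assignment all `C(n, s)` cells with
`S = s` have the same probability, so the weights become uniform. -/

section PotentialOutcomes

variable {Ω β : Type*} [MeasurableSpace Ω] {μ : Measure Ω}
  [MeasurableSpace β] [MeasurableSingletonClass β] {Z : Ω → β}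

theorem setIntegral_preimage_singleton_of_indepFun {X : Ω → ℝ} (hZ : Measurable Z)
    (hX : AEMeasurable X μ) (hXZ : IndepFun X Z μ) (b : β) :
    ∫ ω in Z ⁻¹' {b}, X ω ∂μ = μ.real (Z ⁻¹' {b}) * ∫ ω, X ω ∂μ :=
  Indep.setIntegral_eq_mul (f := id) hZ.comap_le hXZ.symm hX
    ⟨{b}, measurableSet_singleton b, rfl⟩ aestronglyMeasurable_id

theorem setIntegral_preimage_eq_sum_of_indepFun {Y : β → Ω → ℝ} {Yobs : Ω → ℝ}
    (hZ : Measurable Z) (hint : ∀ b, Integrable (Y b) μ) (hindep : ∀ b, IndepFun (Y b) Z μ)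
    (hobs : ∀ ω, Yobs ω = Y (Z ω) ω) (S : Finset β) :
    ∫ ω in Z ⁻¹' S, Yobs ω ∂μ = ∑ b ∈ S, μ.real (Z ⁻¹' {b}) * ∫ ω, Y b ω ∂μ := by
  have hfiber : ∀ b, MeasurableSet (Z ⁻¹' {b}) := fun b => hZ (measurableSet_singleton b)
  have hobs_fiber : ∀ b, Set.EqOn Yobs (Y b) (Z ⁻¹' {b}) := fun b ω hω => by
    rw [hobs, Set.mem_preimage.1 hω |> Set.mem_singleton_iff.1]
  have hdisj : (S : Set β).PairwiseDisjoint (fun b => Z ⁻¹' {b}) :=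
    fun b _ c _ hbc => Set.disjoint_singleton.2 hbc |>.preimage Z
  rw [← Set.biUnion_preimage_singleton, Finset.set_biUnion_coe,
    integral_biUnion_finset S (fun b _ => hfiber b) hdisj
      fun b _ => (hint b).integrableOn.congr_fun (hobs_fiber b).symm (hfiber b)]
  refine sum_congr rfl fun b _ => ?_
  rw [setIntegral_congr_fun (hfiber b) (hobs_fiber b),
    setIntegral_preimage_singleton_of_indepFun hZ (hint b).aemeasurable (hindep b)]

end PotentialOutcomes

theorem measureReal_div_mul_cancel_of_subset {Ω : Type*} [MeasurableSpace Ω] {μ : Measure Ω}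
    [IsFiniteMeasure μ] {s t : Set Ω} (hst : s ⊆ t) : μ.real s / μ.real t * μ.real t = μ.real s :=
  div_mul_cancel_of_imp fun ht => measureReal_mono_null hst ht

theorem card_filter_card_true_eq_choose {ι : Type*} [Fintype ι] [DecidableEq ι] (s : ℕ) :
    (univ.filter fun v : ι → Bool => (univ.filter fun j => v j = true).card = s).card
      = (Fintype.card ι).choose s := by
  rw [← card_univ, ← card_powersetCard]
  refine card_nbij' (fun v => univ.filter fun j => v j = true) (fun t j => decide (j ∈ t))
    ?_ ?_ ?_ ?_ <;> intro x hx <;> simp_all [mem_powersetCard]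

theorem stmt_2_general {Ω : Type*} [MeasureSpace Ω] [IsProbabilityMeasure (ℙ : Measure Ω)]
    (n : ℕ) (Y : Bool → (Fin n → Bool) → Ω → ℝ)
    (D : Ω → Bool) (Dvec : Ω → Fin n → Bool)
    (hDmeas : Measurable D)
    (hDvecmeas : Measurable Dvec)
    (hint : ∀ d v, Integrable (Y d v))
    (hindep : ∀ d v, IndepFun (Y d v) (fun ω => (D ω, Dvec ω)) ℙ)
    (Yobs : Ω → ℝ) (hobs : ∀ ω, Yobs ω = Y (D ω) (Dvec ω) ω)
    (d : Bool) (s : ℕ) :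
    ((∫ ω in {ω | D ω = d ∧
        (Finset.univ.filter (fun j => Dvec ω j = true)).card = s}, Yobs ω) /
      (ℙ {ω | D ω = d ∧
        (Finset.univ.filter (fun j => Dvec ω j = true)).card = s}).toReal
      = ∑ v ∈ Finset.univ.filter
          (fun v : Fin n → Bool => (Finset.univ.filter (fun j => v j = true)).card = s),
          (∫ ω, Y d v ω) *
            (((ℙ {ω | D ω = d ∧ Dvec ω = v}).toReal / (ℙ {ω | Dvec ω = v}).toReal) *
              (ℙ {ω | Dvec ω = v}).toReal) /
            (((ℙ {ω | D ω = d ∧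
                (Finset.univ.filter (fun j => Dvec ω j = true)).card = s}).toReal /
              (ℙ {ω | (Finset.univ.filter (fun j => Dvec ω j = true)).card = s}).toReal) *
              (ℙ {ω | (Finset.univ.filter (fun j => Dvec ω j = true)).card = s}).toReal))
    ∧
    (∀ p : ℝ, 0 < p → p < 1 →
      (∀ (d' : Bool) (v : Fin n → Bool),
        (ℙ {ω | D ω = d' ∧ Dvec ω = v}).toReal =
          p ^ ((if d' then 1 else 0) + (Finset.univ.filter (fun j => v j = true)).card) *
          (1 - p) ^ (n + 1 - (if d' then 1 else 0) -
            (Finset.univ.filter (fun j => v j = true)).card)) →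
      (∫ ω in {ω | D ω = d ∧
          (Finset.univ.filter (fun j => Dvec ω j = true)).card = s}, Yobs ω) /
        (ℙ {ω | D ω = d ∧
          (Finset.univ.filter (fun j => Dvec ω j = true)).card = s}).toReal
        = ((n.choose s : ℝ))⁻¹ *
          ∑ v ∈ Finset.univ.filter
            (fun v : Fin n → Bool => (Finset.univ.filter (fun j => v j = true)).card = s),
            ∫ ω, Y d v ω) := by
  set F := univ.filter fun v : Fin n → Bool => (univ.filter fun j => v j = true).card = s
  set A := {ω | D ω = d ∧ (univ.filter fun j => Dvec ω j = true).card = s}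
  let Z : Ω → Bool × (Fin n → Bool) := fun ω => (D ω, Dvec ω)
  have hZ : Measurable Z := hDmeas.prodMk hDvecmeas
  have hA : A = Z ⁻¹' ↑({d} ×ˢ F) := by
    ext ω
    simp only [A, F, Z, Set.mem_ofPred_eq, Set.mem_preimage, coe_product, coe_singleton,
      coe_filter, mem_univ, true_and, Set.mem_prod, Set.mem_singleton_iff]
  have hfiber : ∀ v, {ω | D ω = d ∧ Dvec ω = v} = Z ⁻¹' {(d, v)} := by
    intro v; ext ω; simp [Z]
  simp only [← measureReal_def]
  have hnum : ∫ ω in A, Yobs ω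
      = ∑ v ∈ F, (∫ ω, Y d v ω) * (ℙ : Measure Ω).real {ω | D ω = d ∧ Dvec ω = v} := by
    rw [hA, setIntegral_preimage_eq_sum_of_indepFun (Y := fun b => Y b.1 b.2) hZ
      (fun b => hint _ _) (fun b => hindep _ _) hobs, sum_product, sum_singleton]
    simp_rw [hfiber, mul_comm]
  have hden : (ℙ : Measure Ω).real A
      = ∑ v ∈ F, (ℙ : Measure Ω).real {ω | D ω = d ∧ Dvec ω = v} := by
    rw [hA, ← sum_measureReal_preimage_singleton _ fun b _ => hZ (measurableSet_singleton b),
      sum_product, sum_singleton]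
    simp_rw [hfiber]
  refine ⟨?_, fun p hp0 hp1 hber => ?_⟩
  · rw [hnum, sum_div]
    refine sum_congr rfl fun v _ => ?_
    rw [measureReal_div_mul_cancel_of_subset fun ω hω => hω.2,
      measureReal_div_mul_cancel_of_subset fun ω hω => hω.2]
  · set c := p ^ ((if d then 1 else 0) + s) * (1 - p) ^ (n + 1 - (if d then 1 else 0) - s)
    have hc : c ≠ 0 := (mul_pos (pow_pos hp0 _) (pow_pos (sub_pos.2 hp1) _)).ne'
    have hconst : ∀ v ∈ F, (ℙ : Measure Ω).real {ω | D ω = d ∧ Dvec ω = v} = c := fun v hv => by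
      rw [hber, (mem_filter.1 hv).2]
    rw [hnum, hden, sum_congr rfl fun v hv => by rw [hconst v hv], sum_congr rfl hconst,
      ← sum_mul, sum_const, card_filter_card_true_eq_choose, Fintype.card_fin, nsmul_eq_mul,
      mul_div_mul_right _ _ hc, div_eq_inv_mul]

/-- Lemma 3 (Identification with misspecified exchangeability): without exchangeability,
conditioning on the number of treated neighbors recovers a probability-weighted average of
assignment-specific means; under i.i.d. Bernoulli(p) assignment it is a simple average. -/
theorem stmt_2 {Ω : Type*} [MeasureSpace Ω] [IsProbabilityMeasure (ℙ : Measure Ω)]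
    (n : ℕ) (Y : Bool → (Fin n → Bool) → Ω → ℝ)
    (D : Ω → Bool) (Dvec : Ω → Fin n → Bool)
    (hYmeas : ∀ d v, Measurable (Y d v)) (hDmeas : Measurable D)
    (hDvecmeas : Measurable Dvec)
    (hint : ∀ d v, Integrable (Y d v))
    (hindep : ∀ d v, IndepFun (Y d v) (fun ω => (D ω, Dvec ω)) ℙ)
    (Yobs : Ω → ℝ) (hobs : ∀ ω, Yobs ω = Y (D ω) (Dvec ω) ω)
    (d : Bool) (s : ℕ)
    (hpos : 0 < ℙ {ω | D ω = d ∧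
      (Finset.univ.filter (fun j => Dvec ω j = true)).card = s}) :
    ((∫ ω in {ω | D ω = d ∧
        (Finset.univ.filter (fun j => Dvec ω j = true)).card = s}, Yobs ω) /
      (ℙ {ω | D ω = d ∧
        (Finset.univ.filter (fun j => Dvec ω j = true)).card = s}).toReal
      = ∑ v ∈ Finset.univ.filter
          (fun v : Fin n → Bool => (Finset.univ.filter (fun j => v j = true)).card = s),
          (∫ ω, Y d v ω) *
            (((ℙ {ω | D ω = d ∧ Dvec ω = v}).toReal / (ℙ {ω | Dvec ω = v}).toReal) *
              (ℙ {ω | Dvec ω = v}).toReal) /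
            (((ℙ {ω | D ω = d ∧
                (Finset.univ.filter (fun j => Dvec ω j = true)).card = s}).toReal /
              (ℙ {ω | (Finset.univ.filter (fun j => Dvec ω j = true)).card = s}).toReal) *
              (ℙ {ω | (Finset.univ.filter (fun j => Dvec ω j = true)).card = s}).toReal))
    ∧
    (∀ p : ℝ, 0 < p → p < 1 →
      (∀ (d' : Bool) (v : Fin n → Bool),
        (ℙ {ω | D ω = d' ∧ Dvec ω = v}).toReal =
          p ^ ((if d' then 1 else 0) + (Finset.univ.filter (fun j => v j = true)).card) *
          (1 - p) ^ (n + 1 - (if d' then 1 else 0) -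
            (Finset.univ.filter (fun j => v j = true)).card)) →
      (∫ ω in {ω | D ω = d ∧
          (Finset.univ.filter (fun j => Dvec ω j = true)).card = s}, Yobs ω) /
        (ℙ {ω | D ω = d ∧
          (Finset.univ.filter (fun j => Dvec ω j = true)).card = s}).toReal
        = ((n.choose s : ℝ))⁻¹ *
          ∑ v ∈ Finset.univ.filter
            (fun v : Fin n → Bool => (Finset.univ.filter (fun j => v j = true)).card = s),
            ∫ ω, Y d v ω) :=
  stmt_2_general n Y D Dvec hDmeas hDvecmeas hint hindep Yobs hobs d s
end

section
/- Let (Y(d,𝐝)) be potential outcomes satisfying exchangeability (E[Y(d,𝐝)] = μ(d, Σ_j d_j)) and independent of (𝐃, T), where T ∈ {0,1} is a group-level indicator and 𝐃 ∈ {0,1}^{n+1} the within-group assignment vector with D the own assignment and S the number of treated neighbors. Suppose T = 0 implies 𝐃 = 0 almost surely and P[D=0, T=1] > 0. Define θ_s(0) = μ(0,s) − μ(0,0). Then Δ_PP := E[Y | D=0, T=1] − E[Y | T=0] = Σ_{s=1}^{n} θ_s(0) · P[S=s | D=0, T=1]. -/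
/-!
Condition on the finitely-valued assignment `X = (D, 𝐃, T)`. On each fiber `{X = x}` the observed
outcome is the potential outcome `Y x`, which is independent of `X`, so its integral over the fiber
factors as `E[Y x] · P[X = x]`; by exchangeability `E[Y x]` depends only on the own assignment and the
number of treated neighbours. Hence the treated-group controls average `μ(0, s)` with weights
`P[S = s | D = 0, T = 1]`, while in the pure control groups `𝐃 = 0` almost surely, so their mean is
`μ(0, 0)`. Subtracting, the `s = 0` term cancels because the weights sum to one.
-/

open MeasureTheory ProbabilityTheory Finset
open scoped ProbabilityTheory

section

variable {Ω γ : Type*} [MeasurableSpace Ω] {μ : Measure Ω} [MeasurableSpace γ] {X : Ω → γ}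

theorem setIntegral_preimage_eq_integral_mul_of_indepFun {f : Ω → ℝ} {B : Set γ}
    (hX : Measurable X) (hB : MeasurableSet B) (hf : Integrable f μ) (hfX : IndepFun f X μ) :
    ∫ ω in X ⁻¹' B, f ω ∂μ = (∫ ω, f ω ∂μ) * μ.real (X ⁻¹' B) := by
  have hind : IndepFun f ((X ⁻¹' B).indicator (1 : Ω → ℝ)) μ :=
    hfX.comp measurable_id (measurable_const.indicator hB (f := (1 : γ → ℝ)))
  rw [← integral_indicator (hX hB), ← integral_indicator_one (hX hB),
    ← hind.integral_mul_eq_mul_integral hf.1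
      ((measurable_const.indicator (hX hB)).aestronglyMeasurable)]
  congr 1 with ω
  by_cases h : ω ∈ X ⁻¹' B <;> simp [h]

variable [MeasurableSingletonClass γ]

theorem setIntegral_preimage_finset_eq_sum_of_indepFun (hX : Measurable X) {Y : γ → Ω → ℝ}
    (B : Finset γ) (hY : ∀ x ∈ B, Integrable (Y x) μ) (hYX : ∀ x ∈ B, IndepFun (Y x) X μ) :
    ∫ ω in X ⁻¹' B, Y (X ω) ω ∂μ = ∑ x ∈ B, (∫ ω, Y x ω ∂μ) * μ.real (X ⁻¹' {x}) := by
  have hfiber (x : γ) : MeasurableSet (X ⁻¹' {x}) := hX (measurableSet_singleton x)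
  have hobs (x : γ) : ∫ ω in X ⁻¹' {x}, Y (X ω) ω ∂μ = ∫ ω in X ⁻¹' {x}, Y x ω ∂μ :=
    setIntegral_congr_fun (hfiber x) fun ω hω => by rw [show X ω = x from hω]
  have hpart : X ⁻¹' B = ⋃ x ∈ B, X ⁻¹' {x} := by ext; simp
  rw [hpart, integral_biUnion_finset _ (fun x _ => hfiber x)
    (fun x _ y _ hxy => Disjoint.preimage X (Set.disjoint_singleton.2 hxy))
    (fun x hx => ((hY x hx).integrableOn).congr_fun (fun ω hω => by rw [hω]) (hfiber x))]
  refine Finset.sum_congr rfl fun x hx => ?_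
  rw [hobs, setIntegral_preimage_eq_integral_mul_of_indepFun hX (measurableSet_singleton x)
    (hY x hx) (hYX x hx)]

variable [IsFiniteMeasure μ] {β : Type*} [DecidableEq β] {g : γ → β}

theorem sum_mul_measureReal_preimage_singleton_fiberwise (hX : Measurable X) (B : Finset γ)
    (S : Finset β) (hg : ∀ x ∈ B, g x ∈ S) (c : β → ℝ) :
    ∑ x ∈ B, c (g x) * μ.real (X ⁻¹' {x}) =
      ∑ s ∈ S, c s * μ.real (X ⁻¹' ↑(B.filter fun x => g x = s)) := by
  rw [← Finset.sum_fiberwise_of_maps_to hg]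
  refine Finset.sum_congr rfl fun s _ => ?_
  rw [← sum_measureReal_preimage_singleton _ fun x _ => hX (measurableSet_singleton x),
    Finset.mul_sum]
  refine Finset.sum_congr rfl fun x hx => ?_
  rw [(Finset.mem_filter.1 hx).2]

theorem sum_measureReal_preimage_filter_fiberwise (hX : Measurable X) (B : Finset γ)
    (S : Finset β) (hg : ∀ x ∈ B, g x ∈ S) :
    ∑ s ∈ S, μ.real (X ⁻¹' ↑(B.filter fun x => g x = s)) = μ.real (X ⁻¹' B) := by
  rw [← sum_measureReal_preimage_singleton (μ := μ) B fun x _ => hX (measurableSet_singleton x)]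
  simpa using (sum_mul_measureReal_preimage_singleton_fiberwise (μ := μ) hX B S hg fun _ => 1).symm

theorem setIntegral_preimage_finset_eq_sum_fiberwise_of_indepFun (hX : Measurable X)
    {Y : γ → Ω → ℝ} (B : Finset γ) (S : Finset β) (hg : ∀ x ∈ B, g x ∈ S) (c : β → ℝ)
    (hY : ∀ x ∈ B, Integrable (Y x) μ) (hYX : ∀ x ∈ B, IndepFun (Y x) X μ)
    (hc : ∀ x ∈ B, ∫ ω, Y x ω ∂μ = c (g x)) :
    ∫ ω in X ⁻¹' B, Y (X ω) ω ∂μ = ∑ s ∈ S, c s * μ.real (X ⁻¹' ↑(B.filter fun x => g x = s)) := by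
  rw [setIntegral_preimage_finset_eq_sum_of_indepFun hX B hY hYX,
    ← sum_mul_measureReal_preimage_singleton_fiberwise hX B S hg]
  exact Finset.sum_congr rfl fun x hx => by rw [hc x hx]

end

theorem Finset.sum_sub_mul_div_eq_div_sub {ι : Type*} (s : Finset ι) (m p : ι → ℝ) (a : ι)
    {P : ℝ} (hP : P ≠ 0) (hp : ∑ i ∈ s, p i = P) :
    ∑ i ∈ s, (m i - m a) * (p i / P) = (∑ i ∈ s, m i * p i) / P - m a := by
  calc ∑ i ∈ s, (m i - m a) * (p i / P)
      = (∑ i ∈ s, m i * p i - m a * ∑ i ∈ s, p i) / P := by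
        rw [Finset.mul_sum, ← Finset.sum_sub_distrib, Finset.sum_div]
        exact Finset.sum_congr rfl fun i _ => by ring
    _ = (∑ i ∈ s, m i * p i) / P - m a := by rw [hp]; field_simp

theorem Finset.sum_Icc_one_eq_sum_range_succ {M : Type*} [AddCommMonoid M] (f : ℕ → M)
    (n : ℕ) (hf : f 0 = 0) : ∑ s ∈ Icc 1 n, f s = ∑ s ∈ range (n + 1), f s := by
  rw [Nat.range_succ_eq_Icc_zero, ← insert_Icc_add_one_left_eq_Icc n.zero_le,
    sum_insert (by simp), hf, zero_add, zero_add]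

theorem stmt_3_general {Ω : Type*} [MeasureSpace Ω] [IsProbabilityMeasure (ℙ : Measure Ω)]
    (n : ℕ) (Y : Bool → (Fin n → Bool) → Ω → ℝ)
    (D : Ω → Bool) (Dvec : Ω → Fin n → Bool) (T : Ω → Bool)
    (hDmeas : Measurable D)
    (hDvecmeas : Measurable Dvec) (hTmeas : Measurable T)
    (hint : ∀ d v, Integrable (Y d v))
    (hindep : ∀ d v, IndepFun (Y d v) (fun ω => (D ω, Dvec ω, T ω)) ℙ)
    (μf : Bool → ℕ → ℝ)
    (hexch : ∀ d v, (∫ ω, Y d v ω) =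
      μf d ((Finset.univ.filter (fun j => v j = true)).card))
    (Yobs : Ω → ℝ) (hobs : ∀ ω, Yobs ω = Y (D ω) (Dvec ω) ω)
    (hpure : ∀ᵐ ω ∂ℙ, T ω = false → (D ω = false ∧ Dvec ω = fun _ => false))
    (hposT0 : 0 < ℙ {ω | T ω = false})
    (hpos : 0 < ℙ {ω | D ω = false ∧ T ω = true}) :
    (∫ ω in {ω | D ω = false ∧ T ω = true}, Yobs ω) /
        (ℙ {ω | D ω = false ∧ T ω = true}).toReal -
      (∫ ω in {ω | T ω = false}, Yobs ω) / (ℙ {ω | T ω = false}).toReal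
    = ∑ s ∈ Finset.Icc 1 n, (μf false s - μf false 0) *
        ((ℙ {ω | (Finset.univ.filter (fun j => Dvec ω j = true)).card = s ∧
            D ω = false ∧ T ω = true}).toReal /
          (ℙ {ω | D ω = false ∧ T ω = true}).toReal) := by
  set X : Ω → Bool × (Fin n → Bool) × Bool := fun ω => (D ω, Dvec ω, T ω)
  have hX : Measurable X := hDmeas.prodMk (hDvecmeas.prodMk hTmeas)
  set N : (Fin n → Bool) → ℕ := fun v => (univ.filter fun j => v j = true).card
  set B : Finset (Bool × (Fin n → Bool) × Bool) := univ.filter fun x => x.1 = false ∧ x.2.2 = true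
  have hA : {ω | D ω = false ∧ T ω = true} = X ⁻¹' B := by ext; simp [B, X]
  have hN (x) (_ : x ∈ B) : N x.2.1 ∈ range (n + 1) :=
    mem_range_succ_iff.2 ((card_filter_le _ _).trans (by simp))
  set p : ℕ → ℝ := fun s => (ℙ : Measure Ω).real (X ⁻¹' ↑(B.filter fun x => N x.2.1 = s))
  have hp (s : ℕ) : (ℙ {ω | (univ.filter fun j => Dvec ω j = true).card = s ∧
      D ω = false ∧ T ω = true}).toReal = p s := by
    congr 2; ext ω; simp [B, X, N, and_comm]
  have htreated : ∫ ω in X ⁻¹' B, Yobs ω = ∑ s ∈ range (n + 1), μf false s * p s := by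
    rw [funext hobs]
    exact setIntegral_preimage_finset_eq_sum_fiberwise_of_indepFun (Y := fun x => Y x.1 x.2.1)
      hX B _ hN _ (fun _ _ => hint _ _) (fun _ _ => hindep _ _)
      fun x hx => by rw [hexch, (Finset.mem_filter.1 hx).2.1]
  have hcontrol : ∫ ω in {ω | T ω = false}, Yobs ω =
      μf false 0 * (ℙ : Measure Ω).real {ω | T ω = false} := by
    rw [show {ω | T ω = false} = X ⁻¹' {x | x.2.2 = false} from rfl,
      setIntegral_congr_ae (g := Y false fun _ => false) (hX .of_discrete)
        (hpure.mono fun ω hω hT => by rw [hobs, (hω hT).1, (hω hT).2]),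
      setIntegral_preimage_eq_integral_mul_of_indepFun hX .of_discrete (hint _ _) (hindep _ _),
      hexch]
    simp
  have hPA : (ℙ : Measure Ω).real (X ⁻¹' B) ≠ 0 :=
    hA ▸ (ENNReal.toReal_pos hpos.ne' (measure_ne_top _ _)).ne'
  have hPC : (ℙ : Measure Ω).real {ω | T ω = false} ≠ 0 :=
    (ENNReal.toReal_pos hposT0.ne' (measure_ne_top _ _)).ne'
  simp only [hp, ← measureReal_def, hA]
  rw [htreated, hcontrol, mul_div_assoc, div_self hPC, mul_one,
    ← sum_sub_mul_div_eq_div_sub _ _ _ 0 hPA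
      (sum_measureReal_preimage_filter_fiberwise hX B _ hN),
    sum_Icc_one_eq_sum_range_succ _ n (by simp)]

/-- Lemma 4 (Identification in partial population experiments): the partial-population
contrast identifies a weighted average of spillover effects on the controls. -/
theorem stmt_3 {Ω : Type*} [MeasureSpace Ω] [IsProbabilityMeasure (ℙ : Measure Ω)]
    (n : ℕ) (Y : Bool → (Fin n → Bool) → Ω → ℝ)
    (D : Ω → Bool) (Dvec : Ω → Fin n → Bool) (T : Ω → Bool)
    (hYmeas : ∀ d v, Measurable (Y d v)) (hDmeas : Measurable D)
    (hDvecmeas : Measurable Dvec) (hTmeas : Measurable T)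
    (hint : ∀ d v, Integrable (Y d v))
    (hindep : ∀ d v, IndepFun (Y d v) (fun ω => (D ω, Dvec ω, T ω)) ℙ)
    (μf : Bool → ℕ → ℝ)
    (hexch : ∀ d v, (∫ ω, Y d v ω) =
      μf d ((Finset.univ.filter (fun j => v j = true)).card))
    (Yobs : Ω → ℝ) (hobs : ∀ ω, Yobs ω = Y (D ω) (Dvec ω) ω)
    (hpure : ∀ᵐ ω ∂ℙ, T ω = false → (D ω = false ∧ Dvec ω = fun _ => false))
    (hposT0 : 0 < ℙ {ω | T ω = false})
    (hpos : 0 < ℙ {ω | D ω = false ∧ T ω = true}) :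
    (∫ ω in {ω | D ω = false ∧ T ω = true}, Yobs ω) /
        (ℙ {ω | D ω = false ∧ T ω = true}).toReal -
      (∫ ω in {ω | T ω = false}, Yobs ω) / (ℙ {ω | T ω = false}).toReal
    = ∑ s ∈ Finset.Icc 1 n, (μf false s - μf false 0) *
        ((ℙ {ω | (Finset.univ.filter (fun j => Dvec ω j = true)).card = s ∧
            D ω = false ∧ T ω = true}).toReal /
          (ℙ {ω | D ω = false ∧ T ω = true}).toReal) :=
  stmt_3_general n Y D Dvec T hDmeas hDvecmeas hTmeas hint hindep μf hexch Yobs hobs hpure hposT0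
    hpos
end

section
/- Under exchangeability and independence of potential outcomes from assignments, with P[D=d,S=s]>0 for all (d,s), the population difference in means β_D := E[Y | D=1] − E[Y | D=0] satisfies β_D = τ_0 + Σ_{s=1}^{n} θ_s(1) P[S=s | D=1] − Σ_{s=1}^{n} θ_s(0) P[S=s | D=0], where τ_0 = μ(1,0) − μ(0,0) and θ_s(d) = μ(d,s) − μ(d,0). -/
/-!
Partitioning the event `{D = d}` by the value of `S` writes `E[Y | D = d]` as the
`P[S = s | D = d]`-weighted average of the cell means `μ(d, s)`. Since the weights sum to one,
that average is `μ(d, 0) + Σ_s (μ(d, s) - μ(d, 0)) P[S = s | D = d]`, and the `s = 0` term of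
the sum vanishes. Subtracting the two arms gives the decomposition.
-/

open MeasureTheory ProbabilityTheory Finset
open scoped ProbabilityTheory

lemma sum_mul_div_sum_eq_add_sum_sub_mul {ι : Type*} (t : Finset ι) (m p : ι → ℝ) (c : ℝ)
    (hp : ∑ s ∈ t, p s ≠ 0) :
    (∑ s ∈ t, m s * p s) / ∑ s ∈ t, p s
      = c + ∑ s ∈ t, (m s - c) * (p s / ∑ s ∈ t, p s) := by
  simp only [← mul_div_assoc, ← sum_div, sub_mul, sum_sub_distrib, ← mul_sum]
  field_simp
  ring

section Partition

variable {Ω ι : Type*} {P : Ω → Prop} {S : Ω → ι} {t : Finset ι}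

lemma setOf_eq_biUnion_and_eq (hSt : ∀ ω, S ω ∈ t) :
    {ω | P ω} = ⋃ s ∈ t, {ω | P ω ∧ S ω = s} := by
  ext ω
  simp only [Set.mem_ofPred_eq, Set.mem_iUnion, exists_prop]
  exact ⟨fun hP => ⟨S ω, hSt ω, hP, rfl⟩, fun ⟨_, _, hP, _⟩ => hP⟩

lemma pairwiseDisjoint_and_eq :
    (t : Set ι).PairwiseDisjoint fun s => {ω | P ω ∧ S ω = s} :=
  fun _ _ _ _ hij => Set.disjoint_left.mpr fun _ hi hj => hij (hi.2.symm.trans hj.2)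

variable [MeasurableSpace Ω] [MeasurableSpace ι] [MeasurableSingletonClass ι] {μ : Measure Ω}

lemma measurableSet_and_eq (hP : MeasurableSet {ω | P ω}) (hS : Measurable S) (s : ι) :
    MeasurableSet {ω | P ω ∧ S ω = s} :=
  hP.inter (hS (measurableSet_singleton s))

lemma measure_toReal_eq_sum_and_eq [IsFiniteMeasure μ] (hP : MeasurableSet {ω | P ω})
    (hS : Measurable S) (hSt : ∀ ω, S ω ∈ t) :
    (μ {ω | P ω}).toReal = ∑ s ∈ t, (μ {ω | P ω ∧ S ω = s}).toReal := by
  rw [setOf_eq_biUnion_and_eq hSt]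
  exact measureReal_biUnion_finset pairwiseDisjoint_and_eq
    (fun s _ => measurableSet_and_eq hP hS s)

lemma setIntegral_eq_sum_and_eq {Y : Ω → ℝ} (hY : Integrable Y μ) (hP : MeasurableSet {ω | P ω})
    (hS : Measurable S) (hSt : ∀ ω, S ω ∈ t) :
    ∫ ω in {ω | P ω}, Y ω ∂μ = ∑ s ∈ t, ∫ ω in {ω | P ω ∧ S ω = s}, Y ω ∂μ := by
  rw [setOf_eq_biUnion_and_eq hSt]
  exact integral_biUnion_finset t (fun s _ => measurableSet_and_eq hP hS s)
    pairwiseDisjoint_and_eq (fun s _ => hY.integrableOn)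

end Partition

lemma setIntegral_div_measure_eq_add_sum_sub_mul {Ω : Type*} [MeasurableSpace Ω]
    {μ : Measure Ω} [IsFiniteMeasure μ] (n : ℕ) (Y : Ω → ℝ) (D : Ω → Bool) (S : Ω → ℕ)
    (hD : Measurable D) (hS : Measurable S) (hY : Integrable Y μ) (hSle : ∀ ω, S ω ≤ n)
    (d : Bool) (hpos : ∀ s ≤ n, 0 < μ {ω | D ω = d ∧ S ω = s}) (m : ℕ → ℝ)
    (hm : ∀ s ≤ n,
      (∫ ω in {ω | D ω = d ∧ S ω = s}, Y ω ∂μ) / (μ {ω | D ω = d ∧ S ω = s}).toReal = m s) :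
    (∫ ω in {ω | D ω = d}, Y ω ∂μ) / (μ {ω | D ω = d}).toReal
      = m 0 + ∑ s ∈ Icc 1 n, (m s - m 0) *
          ((μ {ω | S ω = s ∧ D ω = d}).toReal / (μ {ω | D ω = d}).toReal) := by
  set p : ℕ → ℝ := fun s => (μ {ω | D ω = d ∧ S ω = s}).toReal
  have hp_pos : ∀ s ≤ n, 0 < p s := fun s hs =>
    ENNReal.toReal_pos (hpos s hs).ne' (measure_ne_top _ _)
  have hSt : ∀ ω, S ω ∈ Iic n := fun ω => mem_Iic.mpr (hSle ω)
  have hDd : MeasurableSet {ω | D ω = d} := hD (measurableSet_singleton d)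
  have hcell : ∀ s ∈ Iic n, ∫ ω in {ω | D ω = d ∧ S ω = s}, Y ω ∂μ = m s * p s := fun s hs =>
    (div_eq_iff (hp_pos s (mem_Iic.mp hs)).ne').mp (hm s (mem_Iic.mp hs))
  have hmass : (μ {ω | D ω = d}).toReal = ∑ s ∈ Iic n, p s :=
    measure_toReal_eq_sum_and_eq hDd hS hSt
  have hmass_pos : 0 < ∑ s ∈ Iic n, p s :=
    sum_pos' (fun _ _ => ENNReal.toReal_nonneg) ⟨0, mem_Iic.mpr n.zero_le, hp_pos 0 n.zero_le⟩
  have hswap : ∀ s, {ω | S ω = s ∧ D ω = d} = {ω | D ω = d ∧ S ω = s} :=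
    fun s => Set.ext fun _ => and_comm
  rw [setIntegral_eq_sum_and_eq hY hDd hS hSt, sum_congr rfl hcell, hmass,
    sum_mul_div_sum_eq_add_sum_sub_mul _ m p (m 0) hmass_pos.ne']
  simp only [hswap]
  congr 1
  refine (sum_subset (fun s hs => mem_Iic.mpr (mem_Icc.mp hs).2) fun s hsn hs => ?_).symm
  obtain rfl : s = 0 := by simp only [mem_Icc, mem_Iic, not_and, not_le] at hsn hs; omega
  simp

theorem stmt_4_general {Ω : Type*} [MeasureSpace Ω] [IsProbabilityMeasure (ℙ : Measure Ω)]
    (n : ℕ) (Y : Ω → ℝ) (D : Ω → Bool) (S : Ω → ℕ)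
    (hDmeas : Measurable D) (hSmeas : Measurable S)
    (hint : Integrable Y)
    (hSle : ∀ ω, S ω ≤ n)
    (hpos : ∀ (d : Bool) (s : ℕ), s ≤ n → 0 < ℙ {ω | D ω = d ∧ S ω = s})
    (μf : Bool → ℕ → ℝ)
    (hid : ∀ (d : Bool) (s : ℕ), s ≤ n →
      (∫ ω in {ω | D ω = d ∧ S ω = s}, Y ω) /
        (ℙ {ω | D ω = d ∧ S ω = s}).toReal = μf d s) :
    (∫ ω in {ω | D ω = true}, Y ω) / (ℙ {ω | D ω = true}).toReal -
      (∫ ω in {ω | D ω = false}, Y ω) / (ℙ {ω | D ω = false}).toReal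
    = (μf true 0 - μf false 0)
      + ∑ s ∈ Finset.Icc 1 n, (μf true s - μf true 0) *
          ((ℙ {ω | S ω = s ∧ D ω = true}).toReal / (ℙ {ω | D ω = true}).toReal)
      - ∑ s ∈ Finset.Icc 1 n, (μf false s - μf false 0) *
          ((ℙ {ω | S ω = s ∧ D ω = false}).toReal / (ℙ {ω | D ω = false}).toReal) := by
  rw [setIntegral_div_measure_eq_add_sum_sub_mul n Y D S hDmeas hSmeas hint hSle true
      (hpos true) (μf true) (hid true),
    setIntegral_div_measure_eq_add_sum_sub_mul n Y D S hDmeas hSmeas hint hSle false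
      (hpos false) (μf false) (hid false)]
  ring

/-- Lemma 5 (Difference in means): the population difference in means equals the direct
effect `τ₀` plus a difference of weighted averages of spillover effects. -/
theorem stmt_4 {Ω : Type*} [MeasureSpace Ω] [IsProbabilityMeasure (ℙ : Measure Ω)]
    (n : ℕ) (Y : Ω → ℝ) (D : Ω → Bool) (S : Ω → ℕ)
    (hYmeas : Measurable Y) (hDmeas : Measurable D) (hSmeas : Measurable S)
    (hint : Integrable Y)
    (hSle : ∀ ω, S ω ≤ n)
    (hpos : ∀ (d : Bool) (s : ℕ), s ≤ n → 0 < ℙ {ω | D ω = d ∧ S ω = s})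
    (μf : Bool → ℕ → ℝ)
    (hid : ∀ (d : Bool) (s : ℕ), s ≤ n →
      (∫ ω in {ω | D ω = d ∧ S ω = s}, Y ω) /
        (ℙ {ω | D ω = d ∧ S ω = s}).toReal = μf d s) :
    (∫ ω in {ω | D ω = true}, Y ω) / (ℙ {ω | D ω = true}).toReal -
      (∫ ω in {ω | D ω = false}, Y ω) / (ℙ {ω | D ω = false}).toReal
    = (μf true 0 - μf false 0)
      + ∑ s ∈ Finset.Icc 1 n, (μf true s - μf true 0) *
          ((ℙ {ω | S ω = s ∧ D ω = true}).toReal / (ℙ {ω | D ω = true}).toReal)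
      - ∑ s ∈ Finset.Icc 1 n, (μf false s - μf false 0) *
          ((ℙ {ω | S ω = s ∧ D ω = false}).toReal / (ℙ {ω | D ω = false}).toReal) :=
  stmt_4_general n Y D S hDmeas hSmeas hint hSle hpos μf hid
end

section
/- In the setting of the previous statement, if additionally D is independent of S (e.g., under simple random assignment with i.i.d. treatments), then β_D = τ_0 + Σ_{s=1}^{n} (θ_s(1) − θ_s(0)) P[S=s]. -/
open MeasureTheory ProbabilityTheory Finset
open scoped ProbabilityTheory

/-!
Conditioning on `S` splits the mean of `Y` over `{D = d}` into the cell means `μ(d, s)`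
weighted by `P[D = d, S = s] / P[D = d]`, which independence turns into `P[S = s]`. Hence
`β_D = Σ_s (μ(1, s) − μ(0, s)) P[S = s]`, and since the weights `P[S = s]` sum to one, the
constant `τ₀ = μ(1, 0) − μ(0, 0)` can be pulled out, leaving the increments `θ_s(1) − θ_s(0)`.
-/

theorem Finset.sum_mul_eq_add_sum_sub_mul {ι R : Type*} [CommRing R] {u : Finset ι}
    {g p : ι → R} (hp : ∑ i ∈ u, p i = 1) (c : R) :
    ∑ i ∈ u, g i * p i = c + ∑ i ∈ u, (g i - c) * p i := by
  simp only [sub_mul, sum_sub_distrib, ← mul_sum, hp, mul_one, add_sub_cancel]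

namespace MeasureTheory

variable {Ω α β : Type*} [MeasurableSpace Ω] {μ : Measure Ω}

theorem setIntegral_div_measureReal_mul [IsFiniteMeasure μ] (f : Ω → ℝ) (s : Set Ω) :
    (∫ ω in s, f ω ∂μ) / μ.real s * μ.real s = ∫ ω in s, f ω ∂μ := by
  by_cases hs : μ.real s = 0
  · rw [setIntegral_measure_zero f ((measureReal_eq_zero_iff).1 hs), zero_div, zero_mul]
  · exact div_mul_cancel₀ _ hs

variable [MeasurableSpace β] [MeasurableSingletonClass β] {X : Ω → β} {t : Finset β}

theorem sum_measureReal_setOf_eq [IsProbabilityMeasure μ] (hX : Measurable X)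
    (hXt : ∀ ω, X ω ∈ t) : ∑ b ∈ t, μ.real {ω | X ω = b} = 1 := by
  have := sum_measureReal_preimage_singleton (μ := μ) t fun b _ ↦ hX (measurableSet_singleton b)
  simpa [Set.preimage, hXt] using this

theorem setIntegral_eq_sum_setIntegral_inter_setOf_eq {f : Ω → ℝ} (hf : Integrable f μ)
    (hX : Measurable X) (hXt : ∀ ω, X ω ∈ t) {A : Set Ω} (hA : MeasurableSet A) :
    ∫ ω in A, f ω ∂μ = ∑ b ∈ t, ∫ ω in A ∩ {ω | X ω = b}, f ω ∂μ := by
  have hcover : A = ⋃ b ∈ t, A ∩ {ω | X ω = b} := by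
    ext ω
    simp [hXt]
  conv_lhs => rw [hcover]
  refine integral_biUnion_finset t (fun b _ ↦ hA.inter (hX (measurableSet_singleton b)))
    ?_ fun _ _ ↦ hf.integrableOn
  intro b _ b' _ hbb'
  exact Set.disjoint_left.2 fun ω hb hb' ↦ hbb' (hb.2.symm.trans hb'.2)

theorem measureReal_setOf_and_eq_mul [MeasurableSpace α] [MeasurableSingletonClass α]
    {D : Ω → α} (hind : IndepFun D X μ) (a : α) (b : β) :
    μ.real {ω | D ω = a ∧ X ω = b} = μ.real {ω | D ω = a} * μ.real {ω | X ω = b} := by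
  simp only [measureReal_def, ← ENNReal.toReal_mul]
  congr 1
  exact hind.measure_inter_preimage_eq_mul {a} {b} (measurableSet_singleton a)
    (measurableSet_singleton b)

theorem setIntegral_div_measureReal_eq_sum_mul [IsFiniteMeasure μ] [MeasurableSpace α]
    [MeasurableSingletonClass α] {f : Ω → ℝ} {D : Ω → α} (hf : Integrable f μ)
    (hD : Measurable D) (hX : Measurable X) (hXt : ∀ ω, X ω ∈ t) (hind : IndepFun D X μ)
    (a : α) {m : β → ℝ}
    (hm : ∀ b ∈ t, (∫ ω in {ω | D ω = a ∧ X ω = b}, f ω ∂μ) /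
      μ.real {ω | D ω = a ∧ X ω = b} = m b) :
    (∫ ω in {ω | D ω = a}, f ω ∂μ) / μ.real {ω | D ω = a} =
      ∑ b ∈ t, m b * μ.real {ω | X ω = b} := by
  have hcell : ∀ b ∈ t, ∫ ω in {ω | D ω = a ∧ X ω = b}, f ω ∂μ =
      μ.real {ω | D ω = a} * (m b * μ.real {ω | X ω = b}) := fun b hb ↦ by
    rw [← setIntegral_div_measureReal_mul, hm b hb, measureReal_setOf_and_eq_mul hind]
    ring
  have hsplit : ∫ ω in {ω | D ω = a}, f ω ∂μ =
      μ.real {ω | D ω = a} * ∑ b ∈ t, m b * μ.real {ω | X ω = b} := by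
    rw [setIntegral_eq_sum_setIntegral_inter_setOf_eq (A := {ω | D ω = a}) hf hX hXt
      (hD (measurableSet_singleton a)), mul_sum]
    exact sum_congr rfl hcell
  by_cases ha : μ.real {ω | D ω = a} = 0
  · -- then every cell is null, and `x / 0 = 0` makes each cell mean `m b` vanish
    rw [hsplit, ha, zero_mul, zero_div, eq_comm]
    refine sum_eq_zero fun b hb ↦ ?_
    rw [← hm b hb, measureReal_setOf_and_eq_mul hind, ha, zero_mul, div_zero, zero_mul]
  · rw [hsplit, mul_div_cancel_left₀ _ ha]

end MeasureTheory

theorem stmt_5_general {Ω : Type*} [MeasureSpace Ω] [IsProbabilityMeasure (ℙ : Measure Ω)]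
    (n : ℕ) (Y : Ω → ℝ) (D : Ω → Bool) (S : Ω → ℕ)
    (hDmeas : Measurable D) (hSmeas : Measurable S)
    (hint : Integrable Y)
    (hSle : ∀ ω, S ω ≤ n)
    (μf : Bool → ℕ → ℝ)
    (hid : ∀ (d : Bool) (s : ℕ), s ≤ n →
      (∫ ω in {ω | D ω = d ∧ S ω = s}, Y ω) /
        (ℙ {ω | D ω = d ∧ S ω = s}).toReal = μf d s)
    (hindep : IndepFun D S ℙ) :
    (∫ ω in {ω | D ω = true}, Y ω) / (ℙ {ω | D ω = true}).toReal -
      (∫ ω in {ω | D ω = false}, Y ω) / (ℙ {ω | D ω = false}).toReal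
    = (μf true 0 - μf false 0)
      + ∑ s ∈ Finset.Icc 1 n,
          ((μf true s - μf true 0) - (μf false s - μf false 0)) *
            (ℙ {ω | S ω = s}).toReal := by
  simp only [← measureReal_def] at hid ⊢
  have hSt : ∀ ω, S ω ∈ Icc 0 n := fun ω ↦ mem_Icc.2 ⟨Nat.zero_le _, hSle ω⟩
  have hcell : ∀ d, ∀ s ∈ Icc 0 n, _ := fun d s hs ↦ hid d s (mem_Icc.1 hs).2
  rw [setIntegral_div_measureReal_eq_sum_mul hint hDmeas hSmeas hSt hindep true (hcell true),
    setIntegral_div_measureReal_eq_sum_mul hint hDmeas hSmeas hSt hindep false (hcell false),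
    ← sum_sub_distrib, sum_congr rfl fun s _ ↦ (sub_mul _ _ _).symm,
    sum_mul_eq_add_sum_sub_mul (sum_measureReal_setOf_eq hSmeas hSt) (μf true 0 - μf false 0),
    ← insert_Icc_add_one_left_eq_Icc (Nat.zero_le n), sum_insert (by simp), sub_self, zero_mul,
    zero_add]
  exact congrArg _ (sum_congr rfl fun s _ ↦ by ring)

/-- Difference in means under simple random assignment (D independent of S):
`β_D = τ₀ + Σ_s (θ_s(1) − θ_s(0)) P[S=s]`. -/
theorem stmt_5 {Ω : Type*} [MeasureSpace Ω] [IsProbabilityMeasure (ℙ : Measure Ω)]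
    (n : ℕ) (Y : Ω → ℝ) (D : Ω → Bool) (S : Ω → ℕ)
    (hYmeas : Measurable Y) (hDmeas : Measurable D) (hSmeas : Measurable S)
    (hint : Integrable Y)
    (hSle : ∀ ω, S ω ≤ n)
    (hpos : ∀ (d : Bool) (s : ℕ), s ≤ n → 0 < ℙ {ω | D ω = d ∧ S ω = s})
    (μf : Bool → ℕ → ℝ)
    (hid : ∀ (d : Bool) (s : ℕ), s ≤ n →
      (∫ ω in {ω | D ω = d ∧ S ω = s}, Y ω) /
        (ℙ {ω | D ω = d ∧ S ω = s}).toReal = μf d s)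
    (hindep : IndepFun D S ℙ) :
    (∫ ω in {ω | D ω = true}, Y ω) / (ℙ {ω | D ω = true}).toReal -
      (∫ ω in {ω | D ω = false}, Y ω) / (ℙ {ω | D ω = false}).toReal
    = (μf true 0 - μf false 0)
      + ∑ s ∈ Finset.Icc 1 n,
          ((μf true s - μf true 0) - (μf false s - μf false 0)) *
            (ℙ {ω | S ω = s}).toReal :=
  stmt_5_general n Y D S hDmeas hSmeas hint hSle μf hid hindep
end

section
/- Let D ⊥ S with D Bernoulli(p), S taking values in {0,…,n} with Var(S) > 0, and E[Y | D, S] = μ(0,0) + τ_0 D + Σ_{s=1}^n θ_s(0) 1(S=s)(1−D) + Σ_{s=1}^n θ_s(1) 1(S=s) D. Define the population linear regression of Y on (1, D, S/n), and let γ_ℓ be the coefficient on S/n. Then γ_ℓ = n Σ_{s=1}^{n} [θ_s(0)(1−p) + θ_s(1)p] · (s − E[S]) P[S=s] / Var(S). -/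
/-!
The normal equations for the intercept and for the slope say that the regression residual is
orthogonal to `1` and to `S / n`. As `D ⊥ S`, the treatment indicator has zero covariance with
`S`, so the slope satisfies `c · Var(S / n) = Cov(Y, S / n)`. The covariance
`Cov(Y, S) = E[(S - E S) · Y]` is then computed cell by cell over `{D = d, S = s}`, where the model
prescribes the integral of `Y`: the terms in `μ00` and `τ0` drop out because `S - E S` has mean
zero, and averaging the spillovers over `D` gives the weights `1 - p` and `p`.
-/

open MeasureTheory ProbabilityTheory Finset
open scoped ProbabilityTheory

section Moments

variable {Ω : Type*} {mΩ : MeasurableSpace Ω} {μ : Measure Ω}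

theorem integral_mul_eq_zero_of_forall_integral_sq_le {R v : Ω → ℝ} (hR : MemLp R 2 μ)
    (hv : MemLp v 2 μ) (hmin : ∀ t : ℝ, ∫ ω, R ω ^ 2 ∂μ ≤ ∫ ω, (R ω - t * v ω) ^ 2 ∂μ) :
    ∫ ω, R ω * v ω ∂μ = 0 := by
  have hR2 := hR.integrable_sq
  have hRv : Integrable (fun ω => R ω * v ω) μ := hR.integrable_mul hv
  have hv2 := hv.integrable_sq
  have hexpand : ∀ t : ℝ, ∫ ω, (R ω - t * v ω) ^ 2 ∂μ = ∫ ω, R ω ^ 2 ∂μ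
      - 2 * t * ∫ ω, R ω * v ω ∂μ + t ^ 2 * ∫ ω, v ω ^ 2 ∂μ := fun t => by
    have hsq : (fun ω => (R ω - t * v ω) ^ 2)
        = fun ω => R ω ^ 2 - 2 * t * (R ω * v ω) + t ^ 2 * v ω ^ 2 := by
      funext ω; ring
    have hdiff : Integrable (fun ω => R ω ^ 2 - 2 * t * (R ω * v ω)) μ :=
      hR2.sub (hRv.const_mul _)
    rw [hsq, integral_add hdiff (hv2.const_mul _),
      integral_sub hR2 (hRv.const_mul _), integral_const_mul, integral_const_mul]
  have hdiscrim := discrim_le_zero (a := ∫ ω, v ω ^ 2 ∂μ) (b := -2 * ∫ ω, R ω * v ω ∂μ)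
    (c := 0) fun t => by linarith [hmin t, hexpand t]
  rw [discrim] at hdiscrim
  nlinarith [sq_nonneg (∫ ω, R ω * v ω ∂μ)]

theorem covariance_eq_mul_variance_of_forall_integral_sq_le [IsProbabilityMeasure μ]
    {Y Z X : Ω → ℝ} (hY : MemLp Y 2 μ) (hZ : MemLp Z 2 μ) (hX : MemLp X 2 μ)
    (hZX : IndepFun Z X μ) {a b c : ℝ}
    (hmin : ∀ a' b' c' : ℝ, ∫ ω, (Y ω - a - b * Z ω - c * X ω) ^ 2 ∂μ ≤
      ∫ ω, (Y ω - a' - b' * Z ω - c' * X ω) ^ 2 ∂μ) :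
    cov[Y, X; μ] = c * Var[X; μ] := by
  have hYa : MemLp (fun ω => Y ω - a) 2 μ := hY.sub (memLp_const a)
  have hYaZ : MemLp (fun ω => Y ω - a - b * Z ω) 2 μ := hYa.sub (hZ.const_mul b)
  set R := fun ω => Y ω - a - b * Z ω - c * X ω with hRdef
  have hR : MemLp R 2 μ := hYaZ.sub (hX.const_mul c)
  have horth_one : ∫ ω, R ω * 1 ∂μ = 0 :=
    integral_mul_eq_zero_of_forall_integral_sq_le hR (memLp_const 1) fun t =>
      (hmin (a + t) b c).trans_eq (integral_congr_ae (ae_of_all _ fun ω => by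
        simp only [hRdef]; ring))
  have horth_X : ∫ ω, R ω * X ω ∂μ = 0 :=
    integral_mul_eq_zero_of_forall_integral_sq_le hR hX fun t =>
      (hmin a b (c + t)).trans_eq (integral_congr_ae (ae_of_all _ fun ω => by
        simp only [hRdef]; ring))
  have hcovR : cov[R, X; μ] = 0 := by
    rw [covariance_eq_sub hR hX]
    simp only [mul_one] at horth_one
    simp only [Pi.mul_apply, horth_X, horth_one, zero_mul, sub_zero]
  rw [hRdef, covariance_fun_sub_left hYaZ (hX.const_mul c) hX,
    covariance_fun_sub_left hYa (hZ.const_mul b) hX,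
    covariance_fun_sub_left hY (memLp_const a) hX, covariance_const_left,
    covariance_const_mul_left, covariance_const_mul_left, hZX.covariance_eq_zero hZ hX,
    covariance_self hX.aemeasurable] at hcovR
  linarith

theorem covariance_eq_integral_sub_mul [IsProbabilityMeasure μ] {X Y : Ω → ℝ}
    (hY : MemLp Y 2 μ) (hX : MemLp X 2 μ) :
    cov[Y, X; μ] = ∫ ω, (X ω - μ[X]) * Y ω ∂μ := by
  have hXY : Integrable (fun ω => X ω * Y ω) μ := hX.integrable_mul hY
  simp_rw [covariance_eq_sub hY hX, sub_mul, integral_sub hXY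
    ((hY.integrable one_le_two).const_mul _), integral_const_mul, Pi.mul_apply, mul_comm]

theorem integral_comp_mul_eq_sum_setIntegral {α : Type*} [MeasurableSpace α]
    [MeasurableSingletonClass α] {X : Ω → α} {Y : Ω → ℝ} (hX : Measurable X)
    (hY : Integrable Y μ) {t : Finset α} (hXt : ∀ ω, X ω ∈ t) (f : α → ℝ) :
    ∫ ω, f (X ω) * Y ω ∂μ = ∑ x ∈ t, f x * ∫ ω in X ⁻¹' {x}, Y ω ∂μ := by
  have hcell : ∀ x, MeasurableSet (X ⁻¹' {x}) := fun x => hX (measurableSet_singleton x)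
  have hsplit : (fun ω => f (X ω) * Y ω)
      = fun ω => ∑ x ∈ t, f x * (X ⁻¹' {x}).indicator Y ω := by
    funext ω
    rw [Finset.sum_eq_single_of_mem (X ω) (hXt ω) fun x _ hx => ?_]
    · simp
    · simp [Set.indicator_of_notMem, Ne.symm hx]
  rw [hsplit, integral_finsetSum _ fun x _ => (hY.indicator (hcell x)).const_mul _]
  simp_rw [integral_const_mul, integral_indicator (hcell _)]

theorem setIntegral_eq_mul_of_div_eq [IsFiniteMeasure μ] {Y : Ω → ℝ} {s : Set Ω} {m : ℝ}
    (h : (∫ ω in s, Y ω ∂μ) / (μ s).toReal = m) : ∫ ω in s, Y ω ∂μ = m * (μ s).toReal := by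
  rcases eq_or_ne (μ s) 0 with hs | hs
  · simp [Measure.restrict_eq_zero.mpr hs, hs]
  · rw [← h, div_mul_cancel₀]
    exact ENNReal.toReal_ne_zero.mpr ⟨hs, measure_ne_top _ _⟩

theorem memLp_natCast_of_le [IsFiniteMeasure μ] {S : Ω → ℕ} {n : ℕ} (hS : Measurable S)
    (hSle : ∀ ω, S ω ≤ n) (q : ENNReal) : MemLp (fun ω => (S ω : ℝ)) q μ :=
  MemLp.of_bound (measurable_from_nat.comp hS).aestronglyMeasurable n
    (ae_of_all _ fun ω => by simpa using hSle ω)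

theorem sum_range_sub_integral_mul_toReal_measure_eq_zero [IsProbabilityMeasure μ]
    {S : Ω → ℕ} {n : ℕ} (hS : Measurable S) (hSle : ∀ ω, S ω ≤ n) :
    ∑ s ∈ range (n + 1), ((s : ℝ) - ∫ ω, (S ω : ℝ) ∂μ) * (μ {ω | S ω = s}).toReal = 0 := by
  have h := integral_comp_mul_eq_sum_setIntegral (μ := μ) hS (integrable_const (1 : ℝ))
    (fun ω => mem_range.mpr (Nat.lt_succ_of_le (hSle ω))) fun s => (s : ℝ) - ∫ ω, (S ω : ℝ) ∂μ
  simp only [mul_one, setIntegral_const, smul_eq_mul] at h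
  rw [integral_sub ((memLp_natCast_of_le hS hSle 1).integrable le_rfl) (integrable_const _),
    integral_const, probReal_univ, one_smul, sub_self] at h
  exact h.symm

end Moments

section LinearInMeans

variable {Ω : Type*} [MeasureSpace Ω] [IsProbabilityMeasure (ℙ : Measure Ω)]
  {n : ℕ} {Y : Ω → ℝ} {D : Ω → Bool} {S : Ω → ℕ} {p : ℝ}

theorem toReal_measure_and_eq_mul (hDmeas : Measurable D) (hindep : IndepFun D S ℙ)
    (hBern : (ℙ {ω | D ω = true}).toReal = p) (d : Bool) (s : ℕ) :
    (ℙ {ω | D ω = d ∧ S ω = s}).toReal = (if d then p else 1 - p) * (ℙ {ω | S ω = s}).toReal := by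
  rw [show {ω | D ω = d ∧ S ω = s} = D ⁻¹' {d} ∩ S ⁻¹' {s} from rfl,
    hindep.measure_inter_preimage_eq_mul _ _ (measurableSet_singleton d)
      (measurableSet_singleton s), ENNReal.toReal_mul]
  congr 1
  have htrue : MeasurableSet {ω | D ω = true} := hDmeas (measurableSet_singleton true)
  cases d
  · rw [show D ⁻¹' {false} = {ω | D ω = true}ᶜ by ext; simp, ← measureReal_def,
      probReal_compl_eq_one_sub htrue, measureReal_def, hBern]
    rfl
  · exact hBern

theorem covariance_eq_sum_weighted_spillover (hDmeas : Measurable D) (hSmeas : Measurable S)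
    (hY : MemLp Y 2 ℙ) (hSle : ∀ ω, S ω ≤ n) (hBern : (ℙ {ω | D ω = true}).toReal = p)
    (hindep : IndepFun D S ℙ) {μ00 τ0 : ℝ} {θ0 θ1 : ℕ → ℝ}
    (hmodel : ∀ (d : Bool) (s : ℕ), s ≤ n →
      (∫ ω in {ω | D ω = d ∧ S ω = s}, Y ω) / (ℙ {ω | D ω = d ∧ S ω = s}).toReal
        = μ00 + τ0 * (if d then 1 else 0) +
          (if 1 ≤ s then (if d then θ1 s else θ0 s) else 0)) :
    cov[Y, fun ω => (S ω : ℝ); ℙ] = ∑ s ∈ Icc 1 n, (θ0 s * (1 - p) + θ1 s * p) *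
      (((s : ℝ) - ∫ ω, (S ω : ℝ)) * (ℙ {ω | S ω = s}).toReal) := by
  set ES := ∫ ω, (S ω : ℝ)
  have hcell : ∀ d s, s ≤ n → ∫ ω in {ω | D ω = d ∧ S ω = s}, Y ω
      = (μ00 + τ0 * (if d then 1 else 0) + (if 1 ≤ s then (if d then θ1 s else θ0 s) else 0)) *
        ((if d then p else 1 - p) * (ℙ {ω | S ω = s}).toReal) := fun d s hs => by
    rw [setIntegral_eq_mul_of_div_eq (hmodel d s hs),
      toReal_measure_and_eq_mul hDmeas hindep hBern]
  have hpartition := integral_comp_mul_eq_sum_setIntegral (hDmeas.prodMk hSmeas)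
    (hY.integrable one_le_two) (t := univ ×ˢ range (n + 1)) (by simp [hSle])
    fun q => (q.2 : ℝ) - ES
  rw [covariance_eq_integral_sub_mul hY (memLp_natCast_of_le hSmeas hSle 2)]
  calc ∫ ω, ((S ω : ℝ) - ES) * Y ω
      = ∑ s ∈ range (n + 1), ∑ d : Bool,
          ((s : ℝ) - ES) * ∫ ω in {ω | D ω = d ∧ S ω = s}, Y ω := by
        rw [hpartition, sum_product, sum_comm]
        simp only [Set.preimage, Set.mem_singleton_iff, Prod.mk.injEq]
    _ = ∑ s ∈ range (n + 1), ((μ00 + τ0 * p) * (((s : ℝ) - ES) * (ℙ {ω | S ω = s}).toReal) +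
          if 1 ≤ s then (θ0 s * (1 - p) + θ1 s * p) *
            (((s : ℝ) - ES) * (ℙ {ω | S ω = s}).toReal) else 0) := by
        refine sum_congr rfl fun s hs => ?_
        have hs' : s ≤ n := Nat.lt_succ_iff.mp (mem_range.mp hs)
        rw [Fintype.sum_bool, hcell true s hs', hcell false s hs']
        simp only [if_true, Bool.false_eq_true, if_false]
        split_ifs <;> ring
    _ = _ := by
        -- the deviations `s - E S` have mean zero, which removes the `μ00 + τ0 * p` part
        rw [sum_add_distrib, ← mul_sum,
          sum_range_sub_integral_mul_toReal_measure_eq_zero hSmeas hSle, mul_zero, zero_add,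
          ← sum_filter]
        congr 1
        ext s
        simp only [mem_filter, mem_range, mem_Icc]
        omega

end LinearInMeans

theorem stmt_6_general {Ω : Type*} [MeasureSpace Ω] [IsProbabilityMeasure (ℙ : Measure Ω)]
    (n : ℕ) (hn : 1 ≤ n) (Y : Ω → ℝ) (D : Ω → Bool) (S : Ω → ℕ)
    (hDmeas : Measurable D) (hSmeas : Measurable S)
    (hint : Integrable Y) (hint2 : Integrable (fun ω => (Y ω) ^ 2))
    (hSle : ∀ ω, S ω ≤ n)
    (p : ℝ)
    (hBern : (ℙ {ω | D ω = true}).toReal = p)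
    (hindep : IndepFun D S ℙ)
    (hvar : 0 < variance (fun ω => (S ω : ℝ)) ℙ)
    (μ00 τ0 : ℝ) (θ0 θ1 : ℕ → ℝ)
    (hmodel : ∀ (d : Bool) (s : ℕ), s ≤ n →
      (∫ ω in {ω | D ω = d ∧ S ω = s}, Y ω) /
        (ℙ {ω | D ω = d ∧ S ω = s}).toReal
        = μ00 + τ0 * (if d then 1 else 0) +
          (if 1 ≤ s then (if d then θ1 s else θ0 s) else 0))
    (a b c : ℝ)
    (hmin : ∀ a' b' c' : ℝ,
      (∫ ω, (Y ω - a - b * (if D ω then 1 else 0) - c * ((S ω : ℝ) / n)) ^ 2) ≤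
      (∫ ω, (Y ω - a' - b' * (if D ω then 1 else 0) - c' * ((S ω : ℝ) / n)) ^ 2)) :
    c = n * ∑ s ∈ Finset.Icc 1 n,
        (θ0 s * (1 - p) + θ1 s * p) *
          (((s : ℝ) - ∫ ω, (S ω : ℝ)) * (ℙ {ω | S ω = s}).toReal /
            variance (fun ω => (S ω : ℝ)) ℙ) := by
  have hn0 : (n : ℝ) ≠ 0 := Nat.cast_ne_zero.mpr (by omega)
  have hY : MemLp Y 2 ℙ := (memLp_two_iff_integrable_sq hint.aestronglyMeasurable).mpr hint2
  have hS : MemLp (fun ω => (S ω : ℝ)) 2 ℙ := memLp_natCast_of_le hSmeas hSle 2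
  have hD : MemLp (fun ω => if D ω then (1 : ℝ) else 0) 2 ℙ :=
    MemLp.of_bound ((Measurable.of_discrete (f := fun d : Bool => if d then (1 : ℝ) else 0)).comp
      hDmeas).aestronglyMeasurable 1 (ae_of_all _ fun ω => by split <;> simp)
  have hSn : MemLp (fun ω => (S ω : ℝ) / n) 2 ℙ := by
    simpa only [div_eq_mul_inv] using hS.mul_const (n : ℝ)⁻¹
  have hreg := covariance_eq_mul_variance_of_forall_integral_sq_le hY hD hSn
    (hindep.comp (φ := fun d : Bool => if d then (1 : ℝ) else 0) (ψ := fun s : ℕ => (s : ℝ) / n)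
      Measurable.of_discrete Measurable.of_discrete) hmin
  simp_rw [covariance_fun_div_right, div_eq_mul_inv, variance_mul_const] at hreg
  simp_rw [← mul_div_assoc, ← sum_div,
    ← covariance_eq_sum_weighted_spillover hDmeas hSmeas hY hSle hBern hindep hmodel]
  field_simp [hvar.ne'] at hreg ⊢
  linarith

/-- Lemma 6 (LIM regression): the population coefficient on the proportion of treated
neighbors in a linear-in-means regression is a signed linear combination of spillover
effects. -/
theorem stmt_6 {Ω : Type*} [MeasureSpace Ω] [IsProbabilityMeasure (ℙ : Measure Ω)]
    (n : ℕ) (hn : 1 ≤ n) (Y : Ω → ℝ) (D : Ω → Bool) (S : Ω → ℕ)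
    (hYmeas : Measurable Y) (hDmeas : Measurable D) (hSmeas : Measurable S)
    (hint : Integrable Y) (hint2 : Integrable (fun ω => (Y ω) ^ 2))
    (hSle : ∀ ω, S ω ≤ n)
    (p : ℝ) (hp0 : 0 < p) (hp1 : p < 1)
    (hBern : (ℙ {ω | D ω = true}).toReal = p)
    (hindep : IndepFun D S ℙ)
    (hvar : 0 < variance (fun ω => (S ω : ℝ)) ℙ)
    (hpos : ∀ (d : Bool) (s : ℕ), s ≤ n → 0 < ℙ {ω | D ω = d ∧ S ω = s})
    (μ00 τ0 : ℝ) (θ0 θ1 : ℕ → ℝ)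
    (hmodel : ∀ (d : Bool) (s : ℕ), s ≤ n →
      (∫ ω in {ω | D ω = d ∧ S ω = s}, Y ω) /
        (ℙ {ω | D ω = d ∧ S ω = s}).toReal
        = μ00 + τ0 * (if d then 1 else 0) +
          (if 1 ≤ s then (if d then θ1 s else θ0 s) else 0))
    (a b c : ℝ)
    (hmin : ∀ a' b' c' : ℝ,
      (∫ ω, (Y ω - a - b * (if D ω then 1 else 0) - c * ((S ω : ℝ) / n)) ^ 2) ≤
      (∫ ω, (Y ω - a' - b' * (if D ω then 1 else 0) - c' * ((S ω : ℝ) / n)) ^ 2)) :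
    c = n * ∑ s ∈ Finset.Icc 1 n,
        (θ0 s * (1 - p) + θ1 s * p) *
          (((s : ℝ) - ∫ ω, (S ω : ℝ)) * (ℙ {ω | S ω = s}).toReal /
            variance (fun ω => (S ω : ℝ)) ℙ) :=
  stmt_6_general n hn Y D S hDmeas hSmeas hint hint2 hSle p hBern hindep hvar μ00 τ0 θ0 θ1 hmodel a
    b c hmin
end
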